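/- For the SFD-coupled linear system u̇ = Lu − χ(u−w), ẇ = (u−w)/Δ on ℂⁿ, λ is an eigenvalue of the coupled block operator [[L − χI, χI],[I/Δ, −I/Δ]] if and only if there exists an eigenvalue μ of L such that λ² + λ(χ + 1/Δ − μ) − μ/Δ = 0. -/
import Mathlib

open Matrix

lemma mem_spectrum_iff_det (n : ℕ) (M : Matrix (Fin n) (Fin n) ℂ) (μ : ℂ) :
    μ ∈ spectrum ℂ M ↔ (μ • (1 : Matrix (Fin n) (Fin n) ℂ) - M).det = 0 := by
  rw [spectrum.mem_iff, Matrix.isUnit_iff_isUnit_det, isUnit_iff_ne_zero, not_ne_iff,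
    Algebra.algebraMap_eq_smul_one]

/-- Eigenvalues of the SFD-coupled block operator [[L−χI, χI],[I/Δ, −I/Δ]]:
λ is an eigenvalue iff some eigenvalue μ of L satisfies
λ² + λ(χ + 1/Δ − μ) − μ/Δ = 0. -/
theorem sfd_block_spectrum (n : ℕ) (L : Matrix (Fin n) (Fin n) ℂ)
    (χ Δ : ℝ) (hχ : 0 < χ) (hΔ : 0 < Δ) (lam : ℂ) :
    lam ∈ spectrum ℂ
        (Matrix.fromBlocks (L - (χ : ℂ) • (1 : Matrix (Fin n) (Fin n) ℂ))
          ((χ : ℂ) • (1 : Matrix (Fin n) (Fin n) ℂ))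
          ((1 / (Δ : ℂ)) • (1 : Matrix (Fin n) (Fin n) ℂ))
          (-(1 / (Δ : ℂ)) • (1 : Matrix (Fin n) (Fin n) ℂ))) ↔
      ∃ μ ∈ spectrum ℂ L,
        lam ^ 2 + lam * ((χ : ℂ) + 1 / (Δ : ℂ) - μ) - μ / (Δ : ℂ) = 0 := by
  have hΔ0 : (Δ : ℂ) ≠ 0 := Complex.ofReal_ne_zero.mpr hΔ.ne'
  have hχ0 : (χ : ℂ) ≠ 0 := Complex.ofReal_ne_zero.mpr hχ.ne'
  -- rewrite spectrum membership as a determinant condition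
  rw [spectrum.mem_iff, Matrix.isUnit_iff_isUnit_det, isUnit_iff_ne_zero, not_ne_iff,
    Algebra.algebraMap_eq_smul_one]
  have hblock :
      lam • (1 : Matrix (Fin n ⊕ Fin n) (Fin n ⊕ Fin n) ℂ) -
        Matrix.fromBlocks (L - (χ : ℂ) • (1 : Matrix (Fin n) (Fin n) ℂ))
          ((χ : ℂ) • (1 : Matrix (Fin n) (Fin n) ℂ))
          ((1 / (Δ : ℂ)) • (1 : Matrix (Fin n) (Fin n) ℂ))
          (-(1 / (Δ : ℂ)) • (1 : Matrix (Fin n) (Fin n) ℂ)) =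
      Matrix.fromBlocks ((lam + (χ : ℂ)) • 1 - L) ((-(χ : ℂ)) • 1)
        ((-(1 / (Δ : ℂ))) • 1) ((lam + 1 / (Δ : ℂ)) • 1) := by
    rw [← Matrix.fromBlocks_one, Matrix.fromBlocks_smul, sub_eq_add_neg,
      Matrix.fromBlocks_neg, Matrix.fromBlocks_add, Matrix.fromBlocks_inj]
    refine ⟨?_, ?_, ?_, ?_⟩ <;> module
  rw [hblock]
  by_cases hd : lam + 1 / (Δ : ℂ) = 0
  · -- lam = -1/Δ : both sides are false
    have hD : (lam + 1 / (Δ : ℂ)) • (1 : Matrix (Fin n) (Fin n) ℂ) = 0 := by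
      rw [hd, zero_smul]
    constructor
    · intro hdet
      exfalso
      have hmul :
          (Matrix.fromBlocks ((lam + (χ : ℂ)) • 1 - L) ((-(χ : ℂ)) • 1)
            ((-(1 / (Δ : ℂ))) • 1) ((lam + 1 / (Δ : ℂ)) • 1)) *
          (Matrix.fromBlocks 0 1 1 0 :
            Matrix (Fin n ⊕ Fin n) (Fin n ⊕ Fin n) ℂ) =
          Matrix.fromBlocks ((-(χ : ℂ)) • 1) ((lam + (χ : ℂ)) • 1 - L)
            (0 : Matrix (Fin n) (Fin n) ℂ) ((-(1 / (Δ : ℂ))) • 1) := by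
        rw [Matrix.fromBlocks_multiply]
        simp only [Matrix.mul_zero, Matrix.mul_one, zero_add, add_zero, hD]
      have h2 := congrArg Matrix.det hmul
      rw [Matrix.det_mul, hdet, zero_mul, Matrix.det_fromBlocks_zero₂₁] at h2
      simp only [Matrix.det_smul, Matrix.det_one, mul_one, smul_eq_mul,
        Fintype.card_fin] at h2
      have : (-(χ : ℂ)) ^ n * (-(1 / (Δ : ℂ))) ^ n ≠ 0 := by
        apply mul_ne_zero <;> apply pow_ne_zero <;> simp [hχ0, hΔ0]
      exact this h2.symm
    · rintro ⟨μ, _, hq⟩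
      exfalso
      apply mul_ne_zero (neg_ne_zero.mpr hχ0) (one_div_ne_zero hΔ0)
      have hlam : lam = -(1 / (Δ : ℂ)) := by linear_combination hd
      calc (-(χ : ℂ)) * (1 / (Δ : ℂ))
          = lam ^ 2 + lam * ((χ : ℂ) + 1 / (Δ : ℂ) - μ) - μ / (Δ : ℂ) := by
            rw [hlam]; field_simp; ring
        _ = 0 := hq
  · -- lam ≠ -1/Δ : Schur complement via a column operation
    have hd' : lam + 1 / (Δ : ℂ) ≠ 0 := hd
    set d : ℂ := lam + 1 / (Δ : ℂ) with hd_def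
    set μ₀ : ℂ := lam + (χ : ℂ) - (χ : ℂ) / ((Δ : ℂ) * d) with hμ₀
    have hmul :
        (Matrix.fromBlocks ((lam + (χ : ℂ)) • 1 - L) ((-(χ : ℂ)) • 1)
          ((-(1 / (Δ : ℂ))) • 1) (d • 1)) *
        (Matrix.fromBlocks 1 0 (((1 / (Δ : ℂ)) / d) • 1) 1 :
          Matrix (Fin n ⊕ Fin n) (Fin n ⊕ Fin n) ℂ) =
        Matrix.fromBlocks (μ₀ • 1 - L) ((-(χ : ℂ)) • 1)
          (0 : Matrix (Fin n) (Fin n) ℂ) (d • 1) := by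
      rw [Matrix.fromBlocks_multiply, Matrix.fromBlocks_inj]
      refine ⟨?_, by simp, ?_, by simp⟩
      · simp only [Matrix.mul_one, Matrix.mul_zero, Matrix.smul_mul, Matrix.one_mul,
          smul_smul, Matrix.sub_mul]
        have hc : -(χ : ℂ) * (1 / (Δ : ℂ) / d) = μ₀ - (lam + (χ : ℂ)) := by
          rw [hμ₀]; field_simp; ring
        rw [hc]
        module
      · simp only [Matrix.mul_one, Matrix.mul_zero, Matrix.smul_mul, Matrix.one_mul,
          smul_smul, add_zero]
        rw [← add_smul]
        have : -(1 / (Δ : ℂ)) + d * (1 / (Δ : ℂ) / d) = 0 := by field_simp; ring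
        rw [this, zero_smul]
    have h2 := congrArg Matrix.det hmul
    rw [Matrix.det_mul, Matrix.det_fromBlocks_zero₂₁, Matrix.det_fromBlocks_zero₁₂] at h2
    simp only [Matrix.det_one, one_mul, mul_one] at h2
    have hdetd : (d • (1 : Matrix (Fin n) (Fin n) ℂ)).det ≠ 0 := by
      simp only [Matrix.det_smul, Matrix.det_one, smul_eq_mul, mul_one]
      exact pow_ne_zero _ hd
    have hiff : (Matrix.fromBlocks ((lam + (χ : ℂ)) • 1 - L)
        ((-(χ : ℂ)) • (1 : Matrix (Fin n) (Fin n) ℂ))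
        ((-(1 / (Δ : ℂ))) • 1) (d • (1 : Matrix (Fin n) (Fin n) ℂ))).det = 0 ↔
        (μ₀ • (1 : Matrix (Fin n) (Fin n) ℂ) - L).det = 0 := by
      constructor
      · intro h
        rw [h] at h2
        exact (mul_eq_zero.mp h2.symm).resolve_right hdetd
      · intro h
        rw [h2, h, zero_mul]
    -- the key algebraic identity: μ₀ * d = lam² + lam(χ + 1/Δ)
    have hD1 : (1 : ℂ) + lam * (Δ : ℂ) ≠ 0 := by
      have h1 : (Δ : ℂ) * (lam + 1 / (Δ : ℂ)) ≠ 0 :=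
        mul_ne_zero hΔ0 (by rw [← hd_def]; exact hd')
      intro h
      apply h1
      field_simp
      linear_combination h
    have key : μ₀ * (lam + 1 / (Δ : ℂ)) =
        lam ^ 2 + lam * ((χ : ℂ) + 1 / (Δ : ℂ)) := by
      rw [hμ₀, ← hd_def, sub_mul, div_mul_eq_mul_div, mul_comm ((Δ : ℂ)) d,
        ← div_div, mul_div_assoc, div_self hd', mul_one, hd_def]
      field_simp
      ring
    rw [hiff, ← mem_spectrum_iff_det]
    constructor
    · intro h
      exact ⟨μ₀, h, by linear_combination -key⟩
    · rintro ⟨μ, hμ, hq⟩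
      have hμμ₀ : μ = μ₀ := by
        have h1 : μ * (lam + 1 / (Δ : ℂ)) = μ₀ * (lam + 1 / (Δ : ℂ)) := by
          rw [key]; linear_combination -hq
        exact mul_right_cancel₀ hd' h1
      rwa [← hμμ₀]
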